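/- Hidden consensus is possible in SOM^+: there exists a memory-based silence opinion model (SOM^+) whose influence graph is a clique, such that every agent is silent at every time t ≥ 1 (so the public opinions never change after time 0), yet the agents' private opinions converge to a common value v ∈ [0,1] (lim_{t→∞} B_i^t = v for all agents i). -/
import Mathlib

open Finset Filter Topology

noncomputable section

def nbrs {n : ℕ} (I : Fin n → Fin n → ℝ) (i : Fin n) : Finset (Fin n) :=
  Finset.univ.filter (fun j => j ≠ i ∧ I j i ≠ 0)

def maxOp {n : ℕ} (hn : 0 < n) (b : Fin n → ℝ) : ℝ :=
  Finset.univ.sup' ⟨⟨0, hn⟩, Finset.mem_univ _⟩ b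

def minOp {n : ℕ} (hn : 0 < n) (b : Fin n → ℝ) : ℝ :=
  Finset.univ.inf' ⟨⟨0, hn⟩, Finset.mem_univ _⟩ b

def IsClique {n : ℕ} (I : Fin n → Fin n → ℝ) : Prop :=
  ∀ i j : Fin n, i ≠ j → I i j ≠ 0

/-- A memory-based silence opinion model (SOM⁺) on `n` agents. `P t j` is the public
opinion of agent `j` at time `t`, i.e. `B u j` for the largest `u ≤ t` with `s u j = 1`. -/
structure SOMplus (n : ℕ) where
  I : Fin n → Fin n → ℝ
  I_nonneg : ∀ i j, 0 ≤ I i j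
  I_le_one : ∀ i j, I i j ≤ 1
  sum_one : ∀ i, ∑ j ∈ insert i (nbrs I i), I j i = 1
  τ : Fin n → ℝ
  τ_mem : ∀ i, τ i ∈ Set.Icc (0:ℝ) 1
  B : ℕ → Fin n → ℝ
  s : ℕ → Fin n → ℝ
  /-- public opinions -/
  P : ℕ → Fin n → ℝ
  B0_mem : ∀ i, B 0 i ∈ Set.Icc (0:ℝ) 1
  s_bool : ∀ t i, s t i = 0 ∨ s t i = 1
  /-- initially all agents are non-silent -/
  s0 : ∀ i, s 0 i = 1
  /-- `P t j = B u j` where `u = max { u ≤ t | s u j = 1 }` -/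
  P_spec : ∀ t j, ∃ u, u ≤ t ∧ s u j = 1 ∧ P t j = B u j ∧
    ∀ v, v ≤ t → s v j = 1 → v ≤ u
  /-- memory-based opinion update -/
  B_upd : ∀ t i, B (t+1) i =
    B t i + ∑ j ∈ nbrs I i, I j i * (P t j - B t i)
  /-- silence update: non-silent iff at least ⌈|N(i)|/2⌉ neighbors' public opinions are within tolerance -/
  s_upd : ∀ t i, (s (t+1) i = 1 ↔
    ((nbrs I i).card + 1) / 2 ≤
      ((nbrs I i).filter (fun j => |B t i - P t j| ≤ τ i)).card)

namespace Hidden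

def c (i : Fin 4) : ℝ := (i.val % 2 : ℕ)

def myI (j i : Fin 4) : ℝ :=
  if j = i then 1/2 else if j.val % 2 = i.val % 2 then 1/4 else 1/8

lemma myI_pos (j i : Fin 4) : 0 < myI j i := by
  unfold myI
  split
  · norm_num
  · split <;> norm_num

lemma nbrs_eq (i : Fin 4) : nbrs myI i = univ.filter (· ≠ i) := by
  unfold nbrs
  apply filter_congr
  intro j _
  simp [(myI_pos j i).ne']

lemma sum_nbrs (i : Fin 4) (x : ℝ) :
    ∑ j ∈ nbrs myI i, myI j i * (c j - x) = 1/4 - x/2 := by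
  rw [nbrs_eq, sum_filter]
  fin_cases i <;> rw [Fin.sum_univ_four] <;>
    norm_num [myI, c, Fin.ext_iff, show ((0:Fin 4):ℕ)=0 from rfl,
      show ((1:Fin 4):ℕ)=1 from rfl, show ((2:Fin 4):ℕ)=2 from rfl,
      show ((3:Fin 4):ℕ)=3 from rfl] <;> ring

def myB (t : ℕ) (i : Fin 4) : ℝ := 1/2 + (c i - 1/2) * (1/2)^t

lemma eq_c {t : ℕ} {i j : Fin 4} (h : myB t i = c j) :
    t = 0 ∧ j.val % 2 = i.val % 2 := by
  have hp : (0:ℝ) < (1/2:ℝ)^t := by positivity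
  have ht : t ≠ 0 → ((1/2:ℝ))^t < 1 := fun h => pow_lt_one₀ (by norm_num) (by norm_num) h
  unfold myB c at h
  rcases Nat.mod_two_eq_zero_or_one i.val with hi | hi <;>
    rcases Nat.mod_two_eq_zero_or_one j.val with hj | hj <;>
      rw [hi, hj] at h ⊢ <;> push_cast at h <;>
        [skip; (exfalso; nlinarith); (exfalso; nlinarith); skip] <;>
        (refine ⟨?_, rfl⟩; by_contra h0; have := ht h0; nlinarith)

lemma uniq : ∀ i j k : Fin 4, j ≠ i → k ≠ i →
    j.val % 2 = i.val % 2 → k.val % 2 = i.val % 2 → j = k := by decide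

lemma insert_nbrs (i : Fin 4) : insert i (nbrs myI i) = univ := by
  rw [nbrs_eq]
  ext j
  by_cases h : j = i <;> simp [h]

lemma card_nbrs (i : Fin 4) : (nbrs myI i).card = 3 := by
  rw [nbrs_eq]
  fin_cases i <;> decide

def M : SOMplus 4 where
  I := myI
  I_nonneg := fun i j => (myI_pos i j).le
  I_le_one := by
    intro i j
    unfold myI
    split
    · norm_num
    · split <;> norm_num
  sum_one := by
    intro i
    rw [insert_nbrs i]
    fin_cases i <;> rw [Fin.sum_univ_four] <;>
      norm_num [myI, Fin.ext_iff, show ((0:Fin 4):ℕ)=0 from rfl,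
        show ((1:Fin 4):ℕ)=1 from rfl, show ((2:Fin 4):ℕ)=2 from rfl,
        show ((3:Fin 4):ℕ)=3 from rfl]
  τ := fun _ => 0
  τ_mem := by intro i; constructor <;> norm_num
  B := myB
  s := fun t _ => if t = 0 then 1 else 0
  P := fun _ j => c j
  B0_mem := by
    intro i
    have h0 : myB 0 i = c i := by simp [myB]
    rw [h0]
    unfold c
    rcases Nat.mod_two_eq_zero_or_one i.val with hi | hi <;> rw [hi] <;>
      constructor <;> norm_num
  s_bool := by
    intro t i
    by_cases h : t = 0 <;> simp [h]
  s0 := by intro i; simp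
  P_spec := by
    intro t j
    refine ⟨0, Nat.zero_le t, by simp, ?_, ?_⟩
    · simp [myB]
    · intro v _ hv
      by_contra hv0
      have hne : v ≠ 0 := fun h => hv0 (le_of_eq h)
      simp only [if_neg hne] at hv
      norm_num at hv
  B_upd := by
    intro t i
    rw [sum_nbrs i (myB t i)]
    unfold myB
    rw [pow_succ]
    ring
  s_upd := by
    intro t i
    rw [card_nbrs i]
    simp only [if_neg (Nat.succ_ne_zero t)]
    constructor
    · intro h; exact absurd h (by norm_num)
    · intro h
      exfalso
      have hle : ((nbrs myI i).filter
          (fun j => |myB t i - c j| ≤ 0)).card ≤ 1 := by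
        apply Finset.card_le_one.mpr
        intro a ha b hb
        simp only [mem_filter] at ha hb
        have hai : a ≠ i := ((mem_filter.mp ((nbrs_eq i ▸ ha.1 : a ∈ univ.filter (· ≠ i)))).2)
        have hbi : b ≠ i := ((mem_filter.mp ((nbrs_eq i ▸ hb.1 : b ∈ univ.filter (· ≠ i)))).2)
        have ha2 : myB t i = c a := by
          have := abs_nonpos_iff.mp ha.2; linarith [sub_eq_zero.mp this]
        have hb2 : myB t i = c b := by
          have := abs_nonpos_iff.mp hb.2; linarith [sub_eq_zero.mp this]
        exact uniq i a b hai hbi (eq_c ha2).2 (eq_c hb2).2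
      omega
  end Hidden

namespace Hidden
lemma tendsto_myB (i : Fin 4) : Tendsto (fun t => myB t i) atTop (𝓝 (1/2)) := by
  unfold myB
  have h : Tendsto (fun t : ℕ => ((1:ℝ)/2)^t) atTop (𝓝 0) :=
    tendsto_pow_atTop_nhds_zero_of_lt_one (by norm_num) (by norm_num)
  have := (h.const_mul (c i - 1/2)).const_add (1/2 : ℝ)
  simpa using this
end Hidden

/-- Hidden consensus is possible in SOM⁺: there is an SOM⁺ model on a
clique in which every agent is silent at every time `t ≥ 1` (so public opinions never
change after time 0), yet all private opinions converge to a common value `v ∈ [0,1]`. -/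
theorem stmt_18 :
    ∃ (n : ℕ) (M : SOMplus n), IsClique M.I ∧
      (∀ t : ℕ, 1 ≤ t → ∀ i : Fin n, M.s t i = 0) ∧
      ∃ v ∈ Set.Icc (0:ℝ) 1, ∀ i : Fin n, Tendsto (fun t => M.B t i) atTop (𝓝 v) := by
  refine ⟨4, Hidden.M, ?_, ?_, 1/2, by norm_num, ?_⟩
  · intro i j _
    exact (Hidden.myI_pos i j).ne'
  · intro t ht i
    show (if t = 0 then (1:ℝ) else 0) = 0
    rw [if_neg (by omega)]
  · intro i
    exact Hidden.tendsto_myB i
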